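/- arXiv:2002.01959 — 2 statements merged into one kernel-verified Lean document; each statement's English description precedes it below -/
import Mathlib

section
/- Let H be a Hilbert space and H_1, ..., H_n closed subspaces of H. The system H_1, ..., H_n possesses the inverse best approximation property if and only if there exists a constant c > 0 such that ‖x_1 + ... + x_n‖ ≥ c √(‖x_1‖² + ... + ‖x_n‖²) for all x_1 ∈ H_1, ..., x_n ∈ H_n. -/
/-! Let `S : ⨁₂ Kᵢ → H` be the summation map `(xᵢ) ↦ ∑ xᵢ`; its adjoint is `y ↦ (Pᵢ y)ᵢ`.
The inverse best approximation property says that `S†` is onto, and the inequality says that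
`S` is bounded below. For any bounded operator `T` between Hilbert spaces these are equivalent:
if `T†` is onto, the open mapping theorem gives preimages `T† y = e` with `‖y‖ ≤ C ‖e‖`, and
`‖e‖² = re ⟪y, T e⟫ ≤ C ‖e‖ ‖T e‖`; conversely, if `T` is bounded below then so is `T† T`, which
therefore has closed range, and its range is dense because `ker (T† T) = ker T = 0`. -/

noncomputable def orthProjCLM {𝕜 H : Type*} [RCLike 𝕜] [NormedAddCommGroup H]
    [InnerProductSpace 𝕜 H] [CompleteSpace H] (K : Submodule 𝕜 H)
    (hK : IsClosed (K : Set H)) : H →L[𝕜] H :=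
  haveI : CompleteSpace K := hK.completeSpace_coe
  K.subtypeL.comp K.orthogonalProjection

/-- The system of closed subspaces `K 0, ..., K (n-1)` possesses the
inverse best approximation property: for arbitrary `x i ∈ K i` there is `y`
whose orthogonal projection onto each `K i` equals `x i`. -/
def IBAP {𝕜 H : Type*} [RCLike 𝕜] [NormedAddCommGroup H] [InnerProductSpace 𝕜 H]
    [CompleteSpace H] {n : ℕ} (K : Fin n → Submodule 𝕜 H)
    (hK : ∀ i, IsClosed ((K i : Set H))) : Prop :=
  ∀ x : Fin n → H, (∀ i, x i ∈ K i) →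
    ∃ y : H, ∀ i, orthProjCLM (K i) (hK i) y = x i

open ContinuousLinearMap
open scoped InnerProductSpace

namespace ContinuousLinearMap

variable {𝕜 E F : Type*} [RCLike 𝕜] [NormedAddCommGroup E] [InnerProductSpace 𝕜 E]
  [NormedAddCommGroup F] [InnerProductSpace 𝕜 F] [CompleteSpace E] [CompleteSpace F]

theorem exists_pos_mul_norm_le_of_surjective_adjoint {T : E →L[𝕜] F}
    (hT : Function.Surjective (adjoint T)) : ∃ c : ℝ, 0 < c ∧ ∀ e, c * ‖e‖ ≤ ‖T e‖ := by
  obtain ⟨C, hC, hpre⟩ := (adjoint T).exists_preimage_norm_le hT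
  refine ⟨C⁻¹, inv_pos.2 hC, fun e => ?_⟩
  obtain ⟨y, hye, hy⟩ := hpre e
  have : ‖e‖ * ‖e‖ ≤ ‖e‖ * (C * ‖T e‖) :=
    calc ‖e‖ * ‖e‖ = RCLike.re ⟪y, T e⟫_𝕜 := by
          rw [← adjoint_inner_left, hye, inner_self_eq_norm_sq, sq]
      _ ≤ ‖y‖ * ‖T e‖ := (RCLike.re_le_norm _).trans (norm_inner_le_norm _ _)
      _ ≤ C * ‖e‖ * ‖T e‖ := by gcongr
      _ = _ := by ring
  rw [inv_mul_le_iff₀ hC]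
  rcases (norm_nonneg e).eq_or_lt with h0 | h0
  · rw [← h0]; positivity
  · exact le_of_mul_le_mul_left this h0

theorem surjective_adjoint_of_mul_norm_le {T : E →L[𝕜] F} {c : ℝ} (hc : 0 < c)
    (hT : ∀ e, c * ‖e‖ ≤ ‖T e‖) : Function.Surjective (adjoint T) := by
  set B := adjoint T ∘L T
  have hB : ∀ e, c ^ 2 * ‖e‖ ≤ ‖B e‖ := fun e => by
    have : ‖e‖ * (c ^ 2 * ‖e‖) ≤ ‖e‖ * ‖B e‖ :=
      calc ‖e‖ * (c ^ 2 * ‖e‖) = (c * ‖e‖) ^ 2 := by ring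
        _ ≤ ‖T e‖ ^ 2 := by gcongr; exact hT e
        _ = RCLike.re ⟪B e, e⟫_𝕜 := by rw [comp_apply, adjoint_inner_left, inner_self_eq_norm_sq]
        _ ≤ ‖B e‖ * ‖e‖ := (RCLike.re_le_norm _).trans (norm_inner_le_norm _ _)
        _ = _ := mul_comm _ _
    rcases (norm_nonneg e).eq_or_lt with h0 | h0
    · rw [← h0, mul_zero]; positivity
    · exact le_of_mul_le_mul_left this h0
  have hclosed : IsClosed (B.range : Set E) :=
    (B.antilipschitz_of_bound (K := (c ^ 2)⁻¹.toNNReal) fun e => by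
      rw [Real.coe_toNNReal _ (by positivity), le_inv_mul_iff₀ (by positivity)]
      exact hB e).isClosed_range B.uniformContinuous
  have : CompleteSpace B.range := hclosed.completeSpace_coe
  have hker : T.ker = ⊥ := LinearMap.ker_eq_bot'.2 fun e he =>
    norm_le_zero_iff.1 (le_of_mul_le_mul_left (by simpa [show T e = 0 from he] using hT e) hc)
  have hrange : B.range = ⊤ := by
    rw [← Submodule.orthogonal_eq_bot_iff, orthogonal_range, adjoint_comp, adjoint_adjoint,
      ker_adjoint_comp_self, hker]
  intro e
  obtain ⟨g, hg⟩ : e ∈ B.range := hrange ▸ Submodule.mem_top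
  exact ⟨T g, hg⟩

theorem surjective_adjoint_iff_exists_pos_mul_norm_le (T : E →L[𝕜] F) :
    Function.Surjective (adjoint T) ↔ ∃ c : ℝ, 0 < c ∧ ∀ e, c * ‖e‖ ≤ ‖T e‖ :=
  ⟨exists_pos_mul_norm_le_of_surjective_adjoint, fun ⟨_, hc, hT⟩ =>
    surjective_adjoint_of_mul_norm_le hc hT⟩

end ContinuousLinearMap

namespace Submodule

variable {𝕜 H ι : Type*} [RCLike 𝕜] [NormedAddCommGroup H] [InnerProductSpace 𝕜 H]
  (K : ι → Submodule 𝕜 H)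

theorem forall_piLp_iff {P : (ι → H) → Prop} :
    (∀ e : PiLp 2 (fun i => K i), P fun i => e i) ↔ ∀ x : ι → H, (∀ i, x i ∈ K i) → P x :=
  ⟨fun h x hx => h (WithLp.toLp 2 fun i => ⟨x i, hx i⟩), fun h e => h _ fun i => (e i).2⟩

variable [Fintype ι]

noncomputable def sumL : PiLp 2 (fun i => K i) →L[𝕜] H :=
  ∑ i, (K i).subtypeL ∘L PiLp.proj 2 (fun i => K i) i

@[simp]
theorem sumL_apply (e : PiLp 2 (fun i => K i)) : sumL K e = ∑ i, (e i : H) := by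
  simp [sumL]

variable [CompleteSpace H] [∀ i, CompleteSpace (K i)]

theorem adjoint_sumL_apply (y : H) (i : ι) :
    adjoint (sumL K) y i = (K i).orthogonalProjectionOnto y := by
  let P : H →L[𝕜] PiLp 2 (fun i => K i) :=
    (PiLp.continuousLinearEquiv 2 𝕜 (fun i => K i)).symm.toContinuousLinearMap ∘L
      ContinuousLinearMap.pi fun i => (K i).orthogonalProjectionOnto
  have hP : P = adjoint (sumL K) := by
    refine (eq_adjoint_iff _ _).2 fun y e => ?_
    simp [P, PiLp.inner_apply, inner_sum]
  rw [← hP]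
  rfl

end Submodule

open Submodule in
theorem ibap_iff_surjective_adjoint_sumL {𝕜 H : Type*} [RCLike 𝕜] [NormedAddCommGroup H]
    [InnerProductSpace 𝕜 H] [CompleteSpace H] {n : ℕ} (K : Fin n → Submodule 𝕜 H)
    [∀ i, CompleteSpace (K i)] (hK : ∀ i, IsClosed (K i : Set H)) :
    IBAP K hK ↔ Function.Surjective (adjoint (sumL K)) := by
  refine (forall_piLp_iff K).symm.trans (forall_congr' fun e => exists_congr fun y => ?_)
  rw [WithLp.ext_iff, funext_iff]
  refine forall_congr' fun i => ?_
  rw [Subtype.ext_iff, adjoint_sumL_apply]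
  rfl

/-- IBAP iff there is `c > 0` with
`‖x 1 + ... + x n‖ ≥ c √(‖x 1‖² + ... + ‖x n‖²)` for all `x i ∈ K i`. -/
theorem stmt_5 {𝕜 H : Type*} [RCLike 𝕜] [NormedAddCommGroup H]
    [InnerProductSpace 𝕜 H] [CompleteSpace H] {n : ℕ}
    (K : Fin n → Submodule 𝕜 H) (hK : ∀ i, IsClosed ((K i : Set H))) :
    IBAP K hK ↔
      ∃ c : ℝ, 0 < c ∧ ∀ x : Fin n → H, (∀ i, x i ∈ K i) →
        c * Real.sqrt (∑ i, ‖x i‖ ^ 2) ≤ ‖∑ i, x i‖ := by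
  have : ∀ i, CompleteSpace (K i) := fun i => (hK i).completeSpace_coe
  rw [ibap_iff_surjective_adjoint_sumL K hK, surjective_adjoint_iff_exists_pos_mul_norm_le]
  refine exists_congr fun c => and_congr_right fun _ => ?_
  simpa only [Submodule.sumL_apply, PiLp.norm_eq_of_L2, Submodule.coe_norm] using
    Submodule.forall_piLp_iff K (P := fun x => c * Real.sqrt (∑ i, ‖x i‖ ^ 2) ≤ ‖∑ i, x i‖)
end

section
/- Let H be a Hilbert space and H_1, ..., H_n closed subspaces of H. The system H_1, ..., H_n possesses the inverse best approximation property if and only if for every i = 1, ..., n one has H_i^⊥ + ⋂_{j≠i} H_j^⊥ = H. -/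
/-! By linearity, the inverse best approximation property reduces to prescribing one projection
`P_i y = x` while all the others vanish, i.e. to finding `y ∈ ⋂_{j ≠ i} H_jᗮ` with `P_i y = x`.
For a closed subspace `K` and any subspace `M`, solvability of `P_K y = x` with `y ∈ M` for all
`x ∈ K` is exactly `Kᗮ + M = H`: if `P_K y = P_K h` then `h = (h - y) + y` with `h - y ∈ Kᗮ`. -/

section OrthProjCLM

variable {𝕜 H : Type*} [RCLike 𝕜] [NormedAddCommGroup H] [InnerProductSpace 𝕜 H]
  [CompleteSpace H] (K : Submodule 𝕜 H) (hK : IsClosed (K : Set H))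

lemma orthProjCLM_eq_zero_iff (v : H) : orthProjCLM K hK v = 0 ↔ v ∈ Kᗮ := by
  have : CompleteSpace K := hK.completeSpace_coe
  simp only [orthProjCLM, ContinuousLinearMap.comp_apply, Submodule.subtypeL_apply,
    Submodule.coe_eq_zero]
  exact Submodule.orthogonalProjectionOnto_eq_zero_iff

lemma orthProjCLM_eq_self {v : H} (hv : v ∈ K) : orthProjCLM K hK v = v := by
  have : CompleteSpace K := hK.completeSpace_coe
  simp only [orthProjCLM, ContinuousLinearMap.comp_apply, Submodule.subtypeL_apply]
  exact congrArg _ (Submodule.orthogonalProjectionOnto_mem_subspace_eq_self ⟨v, hv⟩)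

lemma orthProjCLM_mem (v : H) : orthProjCLM K hK v ∈ K := by
  have : CompleteSpace K := hK.completeSpace_coe
  exact Submodule.coe_mem _

lemma orthProjCLM_eq_orthProjCLM_iff (u v : H) :
    orthProjCLM K hK u = orthProjCLM K hK v ↔ u - v ∈ Kᗮ := by
  rw [← orthProjCLM_eq_zero_iff, map_sub, sub_eq_zero]

lemma orthogonal_sup_eq_top_iff (M : Submodule 𝕜 H) :
    Kᗮ ⊔ M = ⊤ ↔ ∀ x ∈ K, ∃ y ∈ M, orthProjCLM K hK y = x := by
  constructor
  · intro hsup x hx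
    obtain ⟨u, hu, v, hv, rfl⟩ := Submodule.mem_sup.mp (hsup ▸ Submodule.mem_top : x ∈ Kᗮ ⊔ M)
    refine ⟨v, hv, ?_⟩
    rw [(orthProjCLM_eq_orthProjCLM_iff K hK v (u + v)).mpr (by simpa using Kᗮ.neg_mem hu),
      orthProjCLM_eq_self K hK hx]
  · intro hsolve
    refine eq_top_iff.mpr fun h _ => ?_
    obtain ⟨y, hy, hPy⟩ := hsolve _ (orthProjCLM_mem K hK h)
    have hres : h - y ∈ Kᗮ := (orthProjCLM_eq_orthProjCLM_iff K hK h y).mp hPy.symm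
    simpa using Submodule.add_mem_sup hres hy

end OrthProjCLM

section System

variable {𝕜 H : Type*} [RCLike 𝕜] [NormedAddCommGroup H] [InnerProductSpace 𝕜 H]
  [CompleteSpace H] {n : ℕ} (K : Fin n → Submodule 𝕜 H) (hK : ∀ i, IsClosed (K i : Set H))

lemma forall_orthProjCLM_eq_single_iff (i : Fin n) (x y : H) :
    (∀ j, orthProjCLM (K j) (hK j) y = (Pi.single i x : Fin n → H) j) ↔
      y ∈ ⨅ j, ⨅ (_ : j ≠ i), (K j)ᗮ ∧ orthProjCLM (K i) (hK i) y = x := by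
  simp only [Submodule.mem_iInf, ← orthProjCLM_eq_zero_iff (K _) (hK _)]
  constructor
  · intro hy
    exact ⟨fun j hj => by simpa [hj] using hy j, by simpa using hy i⟩
  · rintro ⟨hy, hyi⟩ j
    rcases eq_or_ne j i with rfl | hj
    · simpa using hyi
    · simpa [hj] using hy j hj

lemma ibap_iff_forall_single :
    IBAP K hK ↔ ∀ i, ∀ x ∈ K i, ∃ y, ∀ j, orthProjCLM (K j) (hK j) y = (Pi.single i x : Fin n → H) j := by
  constructor
  · intro hIBAP i x hx
    refine hIBAP _ fun j => ?_
    rcases eq_or_ne j i with rfl | hj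
    · simpa using hx
    · simp [hj]
  · intro hsingle x hx
    choose y hy using fun i => hsingle i (x i) (hx i)
    refine ⟨∑ i, y i, fun j => ?_⟩
    simp only [map_sum, hy, ← Finset.sum_apply, Finset.univ_sum_single]

end System

/-- IBAP iff `(K i)ᗮ + ⋂_{j ≠ i} (K j)ᗮ = H` for every `i`. -/
theorem stmt_10 {𝕜 H : Type*} [RCLike 𝕜] [NormedAddCommGroup H]
    [InnerProductSpace 𝕜 H] [CompleteSpace H] {n : ℕ}
    (K : Fin n → Submodule 𝕜 H) (hK : ∀ i, IsClosed ((K i : Set H))) :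
    IBAP K hK ↔
      ∀ i, (K i)ᗮ ⊔ (⨅ j, ⨅ (_ : j ≠ i), (K j)ᗮ) = (⊤ : Submodule 𝕜 H) := by
  simp only [ibap_iff_forall_single, orthogonal_sup_eq_top_iff (K _) (hK _),
    forall_orthProjCLM_eq_single_iff]
end
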